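/- Let S = S₁ ⊕ … ⊕ S_k be a schedule in increasing irreducible structure for (N, ⊴, c) with corresponding irreducible intervals I₁,…,I_k. Then there exists l ∈ {0,…,k} such that I₁ ∪ … ∪ I_l attains the minimum of r(I) over all ideals I of ⊴. -/

import Mathlib

open List

variable {ι : Type*} [DecidableEq ι]

/-- Total cost of a schedule (list of jobs). -/
def listCost (c : ι → ℝ) (S : List ι) : ℝ := (S.map c).sum

/-- Budget of a schedule: maximum cost of a prefix (the empty prefix has cost 0). -/
def listBudget (c : ι → ℝ) : List ι → ℝ
  | [] => 0
  | j :: t => max 0 (c j + listBudget c t)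

/-- Return of a schedule. -/
def listReturn (c : ι → ℝ) (S : List ι) : ℝ := listCost c S - listBudget c S

/-- `S` enumerates the finite job set `N` without repetition. -/
def IsScheduleOf (N : Finset ι) (S : List ι) : Prop :=
  S.Nodup ∧ ∀ j, j ∈ S ↔ j ∈ N

/-- `S` is a linear extension of the precedence relation `r` (restricted to its jobs). -/
def RespectsOrder (r : ι → ι → Prop) (S : List ι) : Prop :=
  ∀ i j, r i j → i ∈ S → j ∈ S → S.idxOf i ≤ S.idxOf j

/-- Minimum budget over all feasible schedules of the job set `X`. -/
noncomputable def setBudget (r : ι → ι → Prop) (c : ι → ℝ) (X : Finset ι) : ℝ :=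
  sInf {b | ∃ S : List ι, IsScheduleOf X S ∧ RespectsOrder r S ∧ listBudget c S = b}

/-- Total cost of a job set. -/
def setCost (c : ι → ℝ) (X : Finset ι) : ℝ := ∑ j ∈ X, c j

/-- Return of a job set. -/
noncomputable def setReturn (r : ι → ι → Prop) (c : ι → ℝ) (X : Finset ι) : ℝ :=
  setCost c X - setBudget r c X

/-- The cbr-preorder on job sets. -/
def cbrLE (r : ι → ι → Prop) (c : ι → ℝ) (X Y : Finset ι) : Prop :=
  (setCost c X < 0 ∧ 0 ≤ setCost c Y) ∨
  (setCost c X < 0 ∧ setCost c Y < 0 ∧ setBudget r c X < setBudget r c Y) ∨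
  (setCost c X < 0 ∧ setCost c Y < 0 ∧ setBudget r c X = setBudget r c Y ∧
    setReturn r c X ≤ setReturn r c Y) ∨
  (0 ≤ setCost c X ∧ 0 ≤ setCost c Y ∧ setReturn r c X ≤ setReturn r c Y)

/-- `J` is an ideal (downward-closed subset) of `r` restricted to `I`. -/
def IsIdealIn (r : ι → ι → Prop) (I J : Finset ι) : Prop :=
  J ⊆ I ∧ ∀ j ∈ J, ∀ i ∈ I, r i j → i ∈ J

/-- `F` is a filter (upward-closed subset) of `r` restricted to `I`. -/
def IsFilterIn (r : ι → ι → Prop) (I F : Finset ι) : Prop :=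
  F ⊆ I ∧ ∀ i ∈ F, ∀ j ∈ I, r i j → j ∈ F

/-- `I` is an interval of `r` on `N`: intersection of an ideal and a filter. -/
def IsIntervalIn (r : ι → ι → Prop) (N I : Finset ι) : Prop :=
  ∃ J F, IsIdealIn r N J ∧ IsFilterIn r N F ∧ I = J ∩ F

/-- An irreducible interval: every ideal of the restricted order is `⪰` the interval. -/
def IsIrreducibleIn (r : ι → ι → Prop) (c : ι → ℝ) (N I : Finset ι) : Prop :=
  IsIntervalIn r N I ∧ ∀ J, IsIdealIn r I J → cbrLE r c I J

/-- A schedule (given as blocks `SS`) in increasing irreducible structure. -/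
def IncIrrStructure (r : ι → ι → Prop) (c : ι → ℝ) (N : Finset ι)
    (SS : List (List ι)) : Prop :=
  IsScheduleOf N SS.flatten ∧ RespectsOrder r SS.flatten ∧
  (∀ S ∈ SS, IsIrreducibleIn r c N S.toFinset ∧ RespectsOrder r S ∧
    listBudget c S = setBudget r c S.toFinset) ∧
  ∀ i j : Fin SS.length, i < j → cbrLE r c (SS.get i).toFinset (SS.get j).toFinset

/-!
Write `b`, `c`, `r` for budget, cost and return and `I₁, …, I_k` for the blocks. Every feasible
schedule of `I₁ ∪ ⋯ ∪ I_l` needs budget at least `c I₁ + ⋯ + c I_{i-1} + b Iᵢ` for each `i ≤ l`.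
This goes by induction on the number of blocks: every prefix of a schedule spends at least `c I₁` on
a negative first block (every ideal of it costs that much), and at least `0` on the last block when
all blocks are nonnegative, so such blocks can be split off. What remains is the first block,
handled at the first time some block has spent `b I₁`, and the last block of a nonnegative sequence,
handled at the last time some block has spent its own budget. Hence `r (I₁ ∪ ⋯ ∪ I_l)` is at most
the return `seqReturn` of the sequence of pairs `(c Iᵢ, b Iᵢ)`.

An ideal `I` is the union of the ideals `I ∩ Iᵢ` of the blocks, and concatenating optimal schedules
of these pieces shows that `r I` is at least the return of the sequence `(c (I ∩ Iᵢ), b (I ∩ Iᵢ))`.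
Irreducibility gives `r Iᵢ ≤ r (I ∩ Iᵢ)`, and `c Iᵢ ≤ c (I ∩ Iᵢ)` for negative `Iᵢ`; since the
negative blocks come first, an exchange argument on the two sequences yields a prefix of blocks
whose return is at most `r I`.
-/

variable {r : ι → ι → Prop} {c : ι → ℝ}

/-! ### Budgets of lists -/

section

omit [DecidableEq ι]

@[simp] lemma listCost_nil : listCost c [] = 0 := rfl

@[simp] lemma listCost_cons (a : ι) (S : List ι) : listCost c (a :: S) = c a + listCost c S := by
  simp [listCost]

@[simp] lemma listCost_append (S S' : List ι) :
    listCost c (S ++ S') = listCost c S + listCost c S' := by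
  simp [listCost]

lemma listBudget_nonneg : ∀ S : List ι, 0 ≤ listBudget c S
  | [] => le_rfl
  | _ :: _ => le_max_left _ _

lemma listCost_take_le_listBudget : ∀ (S : List ι) (t : ℕ), listCost c (S.take t) ≤ listBudget c S
  | [], _ => by simp [listBudget]
  | _ :: _, 0 => listBudget_nonneg _
  | a :: S, t + 1 => by
    simpa [listBudget] using Or.inr (listCost_take_le_listBudget S t)

lemma listBudget_le_of_forall_listCost_take_le :
    ∀ {S : List ι} {B : ℝ}, 0 ≤ B → (∀ t, listCost c (S.take t) ≤ B) → listBudget c S ≤ B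
  | [], _, hB, _ => hB
  | a :: S, B, hB, h => by
    have ha : c a ≤ B := by simpa using h 1
    have hS : listBudget c S ≤ B - c a :=
      listBudget_le_of_forall_listCost_take_le (by linarith) fun t => by
        have := h (t + 1)
        simp only [take_succ_cons, listCost_cons] at this
        linarith
    exact max_le hB (by linarith)

lemma exists_le_listCost_take :
    ∀ {S : List ι} {β : ℝ}, β ≤ listBudget c S → ∃ t, β ≤ listCost c (S.take t)
  | [], _, h => ⟨0, h⟩
  | a :: S, β, h => by
    rcases le_max_iff.1 h with h | h
    · exact ⟨0, h⟩
    · obtain ⟨t, ht⟩ := exists_le_listCost_take (S := S) (β := β - c a) (by linarith)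
      exact ⟨t + 1, by simp only [take_succ_cons, listCost_cons]; linarith⟩

lemma listBudget_append (S S' : List ι) :
    listBudget c (S ++ S') = max (listBudget c S) (listCost c S + listBudget c S') := by
  induction S with
  | nil => simpa [listBudget] using (max_eq_right (listBudget_nonneg S')).symm
  | cons a S ih =>
    simp only [cons_append, listBudget, ih, listCost_cons, ← max_add_add_left, ← max_assoc,
      add_assoc]

lemma exists_take_filter_eq (p : ι → Bool) :
    ∀ (S : List ι) (u : ℕ), ∃ t, (S.filter p).take u = (S.take t).filter p
  | [], _ => ⟨0, by simp⟩
  | a :: S, u => by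
    by_cases ha : p a
    · cases u with
      | zero => exact ⟨0, by simp⟩
      | succ u =>
        obtain ⟨t, ht⟩ := exists_take_filter_eq p S u
        exact ⟨t + 1, by simp [filter_cons_of_pos ha, ht]⟩
    · obtain ⟨t, ht⟩ := exists_take_filter_eq p S u
      exact ⟨t + 1, by simp [filter_cons_of_neg ha, ht]⟩

lemma sum_map_add_sub_le_sum_map {α : Type*} {L : List α} {f g : α → ℝ}
    (h : ∀ x ∈ L, g x ≤ f x) {x₀ : α} (hx₀ : x₀ ∈ L) :
    (L.map g).sum + (f x₀ - g x₀) ≤ (L.map f).sum := by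
  have := single_le_sum (forall_mem_map.2 fun x hx => sub_nonneg.2 (h x hx)) _
    (mem_map_of_mem (f := fun x => f x - g x) hx₀)
  have hsplit : (L.map f).sum = (L.map fun x => f x - g x).sum + (L.map g).sum := by
    rw [← sum_map_add]
    simp
  linarith

end

lemma listCost_eq_setCost {S : List ι} (hS : S.Nodup) : listCost c S = setCost c S.toFinset := by
  rw [setCost, sum_toFinset _ hS, listCost]

lemma setCost_toFinset_take_le_listBudget {T : List ι} (hT : T.Nodup) (t : ℕ) :
    setCost c (T.take t).toFinset ≤ listBudget c T := by
  rw [← listCost_eq_setCost (hT.sublist (take_sublist t T))]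
  exact listCost_take_le_listBudget T t

lemma listCost_filter_mem {S : List ι} (hS : S.Nodup) (C : Finset ι) :
    listCost c (S.filter (· ∈ C)) = setCost c (S.toFinset ∩ C) := by
  rw [listCost_eq_setCost (hS.filter _)]
  congr 1
  ext
  simp

/-! ### Feasible schedules -/

lemma respectsOrder_iff_pairwise {S : List ι} (hS : S.Nodup) :
    RespectsOrder r S ↔ S.Pairwise fun i j => ¬ r j i := by
  rw [pairwise_iff_getElem]
  constructor
  · intro h i j hi hj hij hji
    have := h _ _ hji (getElem_mem hj) (getElem_mem hi)
    rw [hS.idxOf_getElem, hS.idxOf_getElem] at this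
    omega
  · intro h x y hxy hx hy
    by_contra! hlt
    exact h _ _ (idxOf_lt_length_iff.2 hy) (idxOf_lt_length_iff.2 hx) hlt
      (by rwa [getElem_idxOf, getElem_idxOf])

lemma IsScheduleOf.toFinset_eq {X : Finset ι} {S : List ι} (hS : IsScheduleOf X S) :
    S.toFinset = X := by
  ext j
  rw [mem_toFinset, hS.2]

lemma isScheduleOf_toFinset {S : List ι} (hS : S.Nodup) : IsScheduleOf S.toFinset S :=
  ⟨hS, fun _ => mem_toFinset.symm⟩

lemma IsScheduleOf.filter {X : Finset ι} {S : List ι} (hS : IsScheduleOf X S) (C : Finset ι) :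
    IsScheduleOf (X ∩ C) (S.filter (· ∈ C)) :=
  ⟨hS.1.filter _, fun j => by simp [hS.2 j]⟩

lemma IsScheduleOf.append {A B : Finset ι} {S S' : List ι} (hS : IsScheduleOf A S)
    (hS' : IsScheduleOf B S') (hAB : Disjoint A B) : IsScheduleOf (A ∪ B) (S ++ S') := by
  refine ⟨nodup_append.2 ⟨hS.1, hS'.1, ?_⟩, fun j => by simp [hS.2 j, hS'.2 j]⟩
  rintro a ha _ hb rfl
  exact Finset.disjoint_left.1 hAB ((hS.2 a).1 ha) ((hS'.2 a).1 hb)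

lemma listCost_of_isScheduleOf {X : Finset ι} {S : List ι} (hS : IsScheduleOf X S) :
    listCost c S = setCost c X := by
  rw [listCost_eq_setCost hS.1, hS.toFinset_eq]

lemma exists_isScheduleOf (hr : IsPartialOrder ι r) (X : Finset ι) :
    ∃ S, IsScheduleOf X S ∧ S.Pairwise fun i j => ¬ r j i := by
  induction X using Finset.strongInduction with
  | H X ih =>
  rcases X.eq_empty_or_nonempty with rfl | hX
  · exact ⟨[], by simp [IsScheduleOf]⟩
  let _ : LE ι := ⟨r⟩
  have : IsTrans ι fun a b => b ≤ a := ⟨fun a b d hab hbd => hr.trans d b a hbd hab⟩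
  obtain ⟨m, hm, hmin⟩ := Finset.exists_minimal hX
  obtain ⟨S, hS, hSf⟩ := ih (X.erase m) (Finset.erase_ssubset hm)
  have hSX : ∀ x ∈ S, x ≠ m ∧ x ∈ X := fun x hx => Finset.mem_erase.1 ((hS.2 x).1 hx)
  refine ⟨m :: S, ⟨nodup_cons.2 ⟨fun h => (hSX m h).1 rfl, hS.1⟩, fun j => ?_⟩,
    pairwise_cons.2 ⟨fun x hx hxm => (hSX x hx).1 (hr.antisymm x m hxm (hmin (hSX x hx).2 hxm)),
      hSf⟩⟩
  rw [mem_cons, hS.2 j, Finset.mem_erase]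
  by_cases hj : j = m <;> simp [hj, hm]

lemma setBudget_le {X : Finset ι} {S : List ι} (hS : IsScheduleOf X S)
    (hf : S.Pairwise fun i j => ¬ r j i) : setBudget r c X ≤ listBudget c S :=
  csInf_le ⟨0, by rintro _ ⟨S, -, -, rfl⟩; exact listBudget_nonneg S⟩
    ⟨S, hS, (respectsOrder_iff_pairwise hS.1).2 hf, rfl⟩

lemma setBudget_nonneg (X : Finset ι) : 0 ≤ setBudget r c X :=
  Real.sInf_nonneg (by rintro _ ⟨S, -, -, rfl⟩; exact listBudget_nonneg S)

lemma exists_optimal_schedule (hr : IsPartialOrder ι r) (X : Finset ι) :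
    ∃ S, IsScheduleOf X S ∧ (S.Pairwise fun i j => ¬ r j i) ∧ listBudget c S = setBudget r c X := by
  have hfin : {b | ∃ S, IsScheduleOf X S ∧ RespectsOrder r S ∧ listBudget c S = b}.Finite := by
    refine (X.toList.permutations.map (listBudget c)).finite_toSet.subset ?_
    rintro _ ⟨S, hS, -, rfl⟩
    refine mem_map_of_mem (mem_permutations.2 ((perm_ext_iff_of_nodup hS.1 X.nodup_toList).2 ?_))
    simp [hS.2]
  obtain ⟨S, hS, hf⟩ := exists_isScheduleOf hr X
  obtain ⟨S', hS', hresp, hb⟩ :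
      setBudget r c X ∈ {b | ∃ S, IsScheduleOf X S ∧ RespectsOrder r S ∧ listBudget c S = b} :=
    Set.Nonempty.csInf_mem ⟨_, S, hS, (respectsOrder_iff_pairwise hS.1).2 hf, rfl⟩ hfin
  exact ⟨S', hS', (respectsOrder_iff_pairwise hS'.1).1 hresp, hb⟩

lemma setCost_le_setBudget (hr : IsPartialOrder ι r) (X : Finset ι) :
    setCost c X ≤ setBudget r c X := by
  obtain ⟨S, hS, -, hb⟩ := exists_optimal_schedule (c := c) hr X
  rw [← hb, ← listCost_of_isScheduleOf hS]
  simpa using listCost_take_le_listBudget S S.length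

lemma exists_le_setCost_take_inter {X C : Finset ι} {T : List ι} (hT : IsScheduleOf X T)
    (hf : T.Pairwise fun i j => ¬ r j i) {β : ℝ} (hβ : β ≤ setBudget r c (X ∩ C)) :
    ∃ t, β ≤ setCost c ((T.take t).toFinset ∩ C) := by
  obtain ⟨u, hu⟩ := exists_le_listCost_take (hβ.trans (setBudget_le (hT.filter C) (hf.filter _)))
  obtain ⟨t, ht⟩ := exists_take_filter_eq (· ∈ C) T u
  exact ⟨t, by rwa [ht, listCost_filter_mem (hT.1.sublist (take_sublist _ _))] at hu⟩

lemma setBudget_le_of_forall_setCost_take_inter_le {I J : Finset ι} {T : List ι}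
    (hT : IsScheduleOf I T) (hf : T.Pairwise fun i j => ¬ r j i) (hJ : J ⊆ I) {β : ℝ}
    (hβ : 0 ≤ β) (h : ∀ t, setCost c ((T.take t).toFinset ∩ J) ≤ β) : setBudget r c J ≤ β := by
  have hTJ := hT.filter J
  rw [Finset.inter_eq_right.2 hJ] at hTJ
  refine (setBudget_le hTJ (hf.filter _)).trans (listBudget_le_of_forall_listCost_take_le hβ ?_)
  intro u
  obtain ⟨t, ht⟩ := exists_take_filter_eq (· ∈ J) T u
  rw [ht, listCost_filter_mem (hT.1.sublist (take_sublist _ _))]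
  exact h t

lemma setBudget_union_le (hr : IsPartialOrder ι r) {A B : Finset ι} (hAB : Disjoint A B)
    (hBA : ∀ y ∈ A, ∀ x ∈ B, ¬ r x y) :
    setBudget r c (A ∪ B) ≤ max (setBudget r c A) (setCost c A + setBudget r c B) := by
  obtain ⟨S, hS, hSf, hSb⟩ := exists_optimal_schedule (c := c) hr A
  obtain ⟨S', hS', hS'f, hS'b⟩ := exists_optimal_schedule (c := c) hr B
  have hf : (S ++ S').Pairwise fun i j => ¬ r j i :=
    pairwise_append.2 ⟨hSf, hS'f, fun y hy x hx => hBA y ((hS.2 y).1 hy) x ((hS'.2 x).1 hx)⟩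
  calc setBudget r c (A ∪ B) ≤ listBudget c (S ++ S') := setBudget_le (hS.append hS' hAB) hf
    _ = _ := by rw [listBudget_append, hSb, hS'b, listCost_of_isScheduleOf hS]

/-! ### Ideals and irreducible sets -/

omit [DecidableEq ι] in
lemma isIdealIn_self (I : Finset ι) : IsIdealIn r I I :=
  ⟨subset_rfl, fun _ _ _ hi _ => hi⟩

omit [DecidableEq ι] in
lemma isIdealIn_empty (I : Finset ι) : IsIdealIn r I ∅ :=
  ⟨Finset.empty_subset I, by simp⟩

lemma IsIdealIn.union {I J K : Finset ι} (hJ : IsIdealIn r I J) (hK : IsIdealIn r I K) :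
    IsIdealIn r I (J ∪ K) := by
  refine ⟨Finset.union_subset hJ.1 hK.1, fun j hj i hi hij => ?_⟩
  rcases Finset.mem_union.1 hj with hj | hj
  · exact Finset.mem_union_left _ (hJ.2 j hj i hi hij)
  · exact Finset.mem_union_right _ (hK.2 j hj i hi hij)

lemma IsIdealIn.inter_of_subset {N J B : Finset ι} (hJ : IsIdealIn r N J) (hB : B ⊆ N) :
    IsIdealIn r B (J ∩ B) :=
  ⟨Finset.inter_subset_right, fun j hj i hi hij => by
    rw [Finset.mem_inter] at hj ⊢
    exact ⟨hJ.2 j hj.1 i (hB hi) hij, hi⟩⟩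

lemma isIdealIn_toFinset_take {N : Finset ι} {T : List ι} (hT : IsScheduleOf N T)
    (hf : T.Pairwise fun i j => ¬ r j i) (t : ℕ) : IsIdealIn r N (T.take t).toFinset := by
  refine ⟨fun x hx => (hT.2 x).1 (take_subset _ _ (mem_toFinset.1 hx)), fun y hy x hx hxy => ?_⟩
  rw [← take_append_drop t T, pairwise_append] at hf
  rw [mem_toFinset] at hy ⊢
  rcases mem_append.1 ((take_append_drop t T).symm ▸ (hT.2 x).2 hx) with h | h
  · exact h
  · exact absurd hxy (hf.2.2 y hy x h)

section CbrLE

variable {X Y : Finset ι}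

lemma cbrLE.setCost_neg_of_right (h : cbrLE r c X Y) (hY : setCost c Y < 0) : setCost c X < 0 := by
  rcases h with h | h | h | h
  · exact h.1
  · exact h.1
  · exact h.1
  · linarith [h.2.1]

lemma cbrLE.setCost_nonneg_of_left (h : cbrLE r c X Y) (hX : 0 ≤ setCost c X) :
    0 ≤ setCost c Y :=
  not_lt.1 fun hY => (h.setCost_neg_of_right hY).not_ge hX

lemma cbrLE.setBudget_le_of_right (h : cbrLE r c X Y) (hY : setCost c Y < 0) :
    setBudget r c X ≤ setBudget r c Y := by
  rcases h with h | h | h | h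
  · linarith [h.2]
  · exact h.2.2.le
  · exact h.2.2.1.le
  · linarith [h.2.1]

lemma cbrLE.setCost_le_of_setBudget_le (h : cbrLE r c X Y) (hY : setCost c Y < 0)
    (hb : setBudget r c Y ≤ setBudget r c X) : setCost c X ≤ setCost c Y := by
  rcases h with h | h | h | h
  · linarith [h.2]
  · linarith [h.2.2]
  · have := h.2.2.2
    unfold setReturn at this
    linarith [h.2.2.1]
  · linarith [h.2.1]

lemma cbrLE.setReturn_le_of_nonneg (h : cbrLE r c X Y) (hX : 0 ≤ setCost c X) :
    setReturn r c X ≤ setReturn r c Y := by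
  rcases h with h | h | h | h
  · linarith [h.1]
  · linarith [h.1]
  · linarith [h.1]
  · exact h.2.2

end CbrLE

def IsCbrIrreducible (r : ι → ι → Prop) (c : ι → ℝ) (I : Finset ι) : Prop :=
  ∀ J, IsIdealIn r I J → cbrLE r c I J

lemma setBudget_le_of_forall_le_setCost (hr : IsPartialOrder ι r) {I J : Finset ι}
    (hJ : IsIdealIn r I J) {m : ℝ} (hm : ∀ K, IsIdealIn r I K → m ≤ setCost c K) :
    setBudget r c J ≤ setBudget r c I + setCost c J - m := by
  obtain ⟨T, hT, hf, hTb⟩ := exists_optimal_schedule (c := c) hr I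
  refine setBudget_le_of_forall_setCost_take_inter_le hT hf hJ.1 ?_ fun t => ?_
  · linarith [setBudget_nonneg (r := r) (c := c) I, hm J hJ]
  · have hP := hTb ▸ setCost_toFinset_take_le_listBudget (c := c) hT.1 t
    have hPJ := hm _ ((isIdealIn_toFinset_take hT hf t).union hJ)
    have := Finset.sum_union_inter (s₁ := (T.take t).toFinset) (s₂ := J) (f := c)
    unfold setCost at *
    linarith

lemma IsCbrIrreducible.setCost_le_of_neg (hr : IsPartialOrder ι r) {I J : Finset ι}
    (hI : IsCbrIrreducible r c I) (hneg : setCost c I < 0) (hJ : IsIdealIn r I J) :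
    setCost c I ≤ setCost c J := by
  classical
  have hmem : ∀ {K}, IsIdealIn r I K → K ∈ I.powerset.filter (IsIdealIn r I) := fun hK => by
    simp [hK, hK.1]
  obtain ⟨K, hK, hKmin⟩ :=
    Finset.exists_min_image (I.powerset.filter (IsIdealIn r I)) (setCost c)
      ⟨∅, hmem (isIdealIn_empty I)⟩
  replace hK := (Finset.mem_filter.1 hK).2
  have hKI := hKmin I (hmem (isIdealIn_self I))
  -- the cheapest ideal needs no more budget than `I`, so by irreducibility it costs at least `c I`
  have hb : setBudget r c K ≤ setBudget r c I := by
    linarith [setBudget_le_of_forall_le_setCost hr hK fun K' hK' => hKmin K' (hmem hK')]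
  calc setCost c I ≤ setCost c K := (hI K hK).setCost_le_of_setBudget_le (hKI.trans_lt hneg) hb
    _ ≤ setCost c J := hKmin J (hmem hJ)

lemma IsCbrIrreducible.setReturn_le (hr : IsPartialOrder ι r) {I J : Finset ι}
    (hI : IsCbrIrreducible r c I) (hJ : IsIdealIn r I J) : setReturn r c I ≤ setReturn r c J := by
  rcases le_or_gt 0 (setCost c I) with hnn | hneg
  · exact (hI J hJ).setReturn_le_of_nonneg hnn
  · have := setBudget_le_of_forall_le_setCost hr hJ fun K hK => hI.setCost_le_of_neg hr hneg hK
    unfold setReturn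
    linarith

/-! ### Increasing irreducible block sequences -/

def blockUnion (BS : List (Finset ι)) : Finset ι := BS.foldr (· ∪ ·) ∅

@[simp] lemma blockUnion_nil : blockUnion ([] : List (Finset ι)) = ∅ := rfl

@[simp] lemma blockUnion_cons (B : Finset ι) (BS : List (Finset ι)) :
    blockUnion (B :: BS) = B ∪ blockUnion BS := rfl

@[simp] lemma blockUnion_append (BS BS' : List (Finset ι)) :
    blockUnion (BS ++ BS') = blockUnion BS ∪ blockUnion BS' := by
  induction BS <;> simp [*, Finset.union_assoc]

lemma mem_blockUnion {BS : List (Finset ι)} {x : ι} : x ∈ blockUnion BS ↔ ∃ B ∈ BS, x ∈ B := by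
  induction BS <;> simp [*]

lemma subset_blockUnion {BS : List (Finset ι)} {B : Finset ι} (hB : B ∈ BS) :
    B ⊆ blockUnion BS :=
  fun _ hx => mem_blockUnion.2 ⟨B, hB, hx⟩

lemma disjoint_blockUnion_left {BS : List (Finset ι)} {A : Finset ι} :
    Disjoint (blockUnion BS) A ↔ ∀ B ∈ BS, Disjoint B A := by
  induction BS <;> simp [*]

lemma disjoint_blockUnion_right {BS : List (Finset ι)} {A : Finset ι} :
    Disjoint A (blockUnion BS) ↔ ∀ B ∈ BS, Disjoint A B := by
  induction BS <;> simp [*]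

lemma blockUnion_map_toFinset (SS : List (List ι)) :
    blockUnion (SS.map toFinset) = SS.flatten.toFinset := by
  induction SS <;> simp [*]

lemma setCost_inter_union {A B : Finset ι} (hAB : Disjoint A B) (X : Finset ι) :
    setCost c (X ∩ (A ∪ B)) = setCost c (X ∩ A) + setCost c (X ∩ B) := by
  rw [setCost, Finset.inter_union_distrib_left,
    Finset.sum_union (hAB.mono Finset.inter_subset_right Finset.inter_subset_right)]
  rfl

lemma setCost_inter_blockUnion {BS : List (Finset ι)} (hd : BS.Pairwise _root_.Disjoint)
    (X : Finset ι) :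
    setCost c (X ∩ blockUnion BS) = (BS.map fun B => setCost c (X ∩ B)).sum := by
  induction BS with
  | nil => simp [setCost]
  | cons B BS ih =>
    rw [pairwise_cons] at hd
    rw [blockUnion_cons, setCost_inter_union (disjoint_blockUnion_right.2 hd.1), ih hd.2,
      map_cons, sum_cons]

lemma setCost_blockUnion {BS : List (Finset ι)} (hd : BS.Pairwise _root_.Disjoint) :
    setCost c (blockUnion BS) = (BS.map (setCost c)).sum := by
  rw [← Finset.inter_self (blockUnion BS), setCost_inter_blockUnion hd]
  exact congrArg sum (map_congr_left fun B hB => by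
    rw [Finset.inter_eq_right.2 (subset_blockUnion hB)])

structure IsIncreasingIrreducible (r : ι → ι → Prop) (c : ι → ℝ) (BS : List (Finset ι)) :
    Prop where
  irreducible : ∀ B ∈ BS, IsCbrIrreducible r c B
  increasing : BS.Pairwise (cbrLE r c)
  disjoint : BS.Pairwise _root_.Disjoint

lemma IsIncreasingIrreducible.sublist {BS BS' : List (Finset ι)}
    (h : IsIncreasingIrreducible r c BS) (hs : BS' <+ BS) : IsIncreasingIrreducible r c BS' :=
  ⟨fun B hB => h.irreducible B (hs.subset hB), h.increasing.sublist hs, h.disjoint.sublist hs⟩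

lemma add_le_setBudget_union (hr : IsPartialOrder ι r) {A B : Finset ι} (hAB : Disjoint A B)
    {β m : ℝ} (hβ : β ≤ setBudget r c A) (hm : ∀ J, IsIdealIn r B J → m ≤ setCost c J) :
    β + m ≤ setBudget r c (A ∪ B) := by
  obtain ⟨T, hT, hf, hTb⟩ := exists_optimal_schedule (c := c) hr (A ∪ B)
  obtain ⟨t, ht⟩ := exists_le_setCost_take_inter hT hf (C := A) (β := β)
    (by rw [Finset.union_inter_cancel_left]; exact hβ)
  have hP := isIdealIn_toFinset_take hT hf t
  calc β + m ≤ setCost c ((T.take t).toFinset ∩ A) + setCost c ((T.take t).toFinset ∩ B) :=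
        add_le_add ht (hm _ (hP.inter_of_subset Finset.subset_union_right))
    _ = setCost c (T.take t).toFinset := by
        rw [← setCost_inter_union hAB, Finset.inter_eq_left.2 hP.1]
    _ ≤ setBudget r c (A ∪ B) := hTb ▸ setCost_toFinset_take_le_listBudget hT.1 t

lemma IsCbrIrreducible.exists_le_setCost_take_inter_of_neg {X C : Finset ι} {T : List ι}
    (hI : IsCbrIrreducible r c C) (hT : IsScheduleOf X T) (hf : T.Pairwise fun i j => ¬ r j i)
    (hC : C ⊆ X) {τ : ℕ} (hneg : setCost c ((T.take τ).toFinset ∩ C) < 0) :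
    ∃ s ≤ τ, setBudget r c C ≤ setCost c ((T.take s).toFinset ∩ C) := by
  have hJ := (isIdealIn_toFinset_take hT hf τ).inter_of_subset hC
  obtain ⟨s, hs⟩ := exists_le_setCost_take_inter
    (isScheduleOf_toFinset (hT.1.sublist (take_sublist τ T))) (hf.sublist (take_sublist τ T))
    ((hI _ hJ).setBudget_le_of_right hneg)
  rw [take_take] at hs
  exact ⟨min s τ, min_le_right s τ, hs⟩

lemma IsIncreasingIrreducible.setBudget_head_le (hr : IsPartialOrder ι r) {B : Finset ι}
    {BS : List (Finset ι)} (h : IsIncreasingIrreducible r c (B :: BS)) :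
    setBudget r c B ≤ setBudget r c (blockUnion (B :: BS)) := by
  classical
  obtain ⟨T, hT, hf, hTb⟩ := exists_optimal_schedule (c := c) hr (blockUnion (B :: BS))
  rcases (setBudget_nonneg (r := r) (c := c) B).eq_or_lt with h0 | hpos
  · exact h0 ▸ setBudget_nonneg _
  have hex : ∃ t, ∃ C ∈ B :: BS, setBudget r c B ≤ setCost c ((T.take t).toFinset ∩ C) := by
    obtain ⟨t, ht⟩ := exists_le_setCost_take_inter hT hf (C := B)
      (by rw [Finset.inter_eq_right.2 (subset_blockUnion mem_cons_self)])
    exact ⟨t, B, mem_cons_self, ht⟩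
  obtain ⟨C₀, hC₀, hτ⟩ := Nat.find_spec hex
  set τ := Nat.find hex
  -- a block with negative spending at `τ` is negative, so its budget is at least `b B`,
  -- and it has already been reached by time `τ`
  have hnonneg : ∀ C ∈ B :: BS, 0 ≤ setCost c ((T.take τ).toFinset ∩ C) := by
    intro C hC
    by_contra! hneg
    have hJ := (isIdealIn_toFinset_take hT hf τ).inter_of_subset (subset_blockUnion hC)
    obtain ⟨s, hsτ, hs⟩ :=
      (h.irreducible C hC).exists_le_setCost_take_inter_of_neg hT hf (subset_blockUnion hC) hneg
    have hBC : setBudget r c B ≤ setBudget r c C := by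
      rcases mem_cons.1 hC with rfl | hC'
      · exact le_rfl
      · exact ((pairwise_cons.1 h.increasing).1 C hC').setBudget_le_of_right
          ((h.irreducible C hC _ hJ).setCost_neg_of_right hneg)
    obtain rfl : s = τ := le_antisymm hsτ (Nat.find_min' hex ⟨C, hC, hBC.trans hs⟩)
    linarith
  calc setBudget r c B ≤ setCost c ((T.take τ).toFinset ∩ C₀) := hτ
    _ ≤ ((B :: BS).map fun C => setCost c ((T.take τ).toFinset ∩ C)).sum :=
        single_le_sum (by simpa using hnonneg) _ (mem_map_of_mem hC₀)
    _ = setCost c (T.take τ).toFinset := by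
        rw [← setCost_inter_blockUnion h.disjoint,
          Finset.inter_eq_left.2 (isIdealIn_toFinset_take hT hf τ).1]
    _ ≤ setBudget r c (blockUnion (B :: BS)) := hTb ▸ setCost_toFinset_take_le_listBudget hT.1 τ

lemma exists_setBudget_le_setCost_take_add_inter (hr : IsPartialOrder ι r) {X C : Finset ι}
    {T : List ι} (hT : IsScheduleOf X T) (hf : T.Pairwise fun i j => ¬ r j i) (hC : C ⊆ X)
    (t : ℕ) (hlt : setBudget r c ((T.take t).toFinset ∩ C) < setBudget r c C) :
    ∃ v, setBudget r c C ≤ setCost c ((T.take (t + v)).toFinset ∩ C) := by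
  obtain ⟨S, hS, hSf, hSb⟩ := exists_optimal_schedule (c := c) hr ((T.take t).toFinset ∩ C)
  have hnd : (T.take t ++ T.drop t).Nodup := (take_append_drop t T).symm ▸ hT.1
  have hTf : (T.take t ++ T.drop t).Pairwise fun i j => ¬ r j i := (take_append_drop t T).symm ▸ hf
  have htail := (isScheduleOf_toFinset (hT.1.sublist (drop_sublist t T))).filter C
  -- an optimal schedule of the part of `C` done by time `t`, followed by the rest of `C` in `T`
  have hsched : IsScheduleOf C (S ++ (T.drop t).filter (· ∈ C)) := by
    have hdisj : Disjoint (T.take t).toFinset (T.drop t).toFinset :=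
      disjoint_toFinset_iff_disjoint.2 (disjoint_of_nodup_append hnd)
    convert hS.append htail (hdisj.mono Finset.inter_subset_left Finset.inter_subset_left) using 1
    rw [← Finset.union_inter_distrib_right, ← toFinset_append, take_append_drop, hT.toFinset_eq,
      Finset.inter_eq_right.2 hC]
  have hfeas : (S ++ (T.drop t).filter (· ∈ C)).Pairwise fun i j => ¬ r j i := by
    refine pairwise_append.2 ⟨hSf, (hf.sublist (drop_sublist t T)).filter _, fun y hy x hx => ?_⟩
    have hy' := mem_toFinset.1 (Finset.mem_inter.1 ((hS.2 y).1 hy)).1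
    exact (pairwise_append.1 hTf).2.2 y hy' x (mem_filter.1 hx).1
  have hbudget := setBudget_le (c := c) hsched hfeas
  rw [listBudget_append, hSb, listCost_of_isScheduleOf hS] at hbudget
  have hclimb : setBudget r c C - setCost c ((T.take t).toFinset ∩ C) ≤
      listBudget c ((T.drop t).filter (· ∈ C)) := by
    rcases le_max_iff.1 hbudget with h | h <;> linarith
  obtain ⟨u, hu⟩ := exists_le_listCost_take hclimb
  obtain ⟨v, hv⟩ := exists_take_filter_eq (· ∈ C) (T.drop t) u
  refine ⟨v, ?_⟩
  rw [hv] at hu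
  rw [← listCost_filter_mem (hT.1.sublist (take_sublist _ _)), take_add, filter_append,
    listCost_append, listCost_filter_mem (hT.1.sublist (take_sublist _ _))]
  linarith

lemma IsCbrIrreducible.setCost_le_setCost_take_inter (hr : IsPartialOrder ι r) {X C : Finset ι}
    {T : List ι} (hI : IsCbrIrreducible r c C) (hT : IsScheduleOf X T)
    (hf : T.Pairwise fun i j => ¬ r j i) (hC : C ⊆ X) (t : ℕ)
    (hlast : ∀ v, setBudget r c C ≤ setCost c ((T.take (t + v)).toFinset ∩ C) →
      T.take (t + v) = T.take t) :
    setCost c C ≤ setCost c ((T.take t).toFinset ∩ C) := by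
  by_contra! hlt
  have hJ := (isIdealIn_toFinset_take hT hf t).inter_of_subset hC
  -- the part `J` of `C` done at time `t` costs less than `C`; as `r C ≤ r J`, also `b J < b C`
  rcases le_or_gt (setBudget r c C) (setBudget r c ((T.take t).toFinset ∩ C)) with hb | hb
  · have := hI.setReturn_le hr hJ
    unfold setReturn at this
    linarith
  · obtain ⟨v, hv⟩ := exists_setBudget_le_setCost_take_add_inter hr hT hf hC t hb
    rw [hlast v hv] at hv
    linarith [setCost_le_setBudget (r := r) (c := c) hr C]

lemma IsIncreasingIrreducible.sum_add_setBudget_le_of_nonneg (hr : IsPartialOrder ι r)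
    {P : List (Finset ι)} {B : Finset ι} (h : IsIncreasingIrreducible r c (P ++ [B]))
    (hnn : ∀ C ∈ P ++ [B], 0 ≤ setCost c C) :
    (P.map (setCost c)).sum + setBudget r c B ≤ setBudget r c (blockUnion (P ++ [B])) := by
  classical
  obtain ⟨T, hT, hf, hTb⟩ := exists_optimal_schedule (c := c) hr (blockUnion (P ++ [B]))
  let Reach (t : ℕ) : Prop := ∃ C ∈ P ++ [B], setBudget r c C ≤ setCost c ((T.take t).toFinset ∩ C)
  have hReach : ∀ {t}, Reach t → Reach (min t T.length) := by
    rintro t ⟨C, hC, hCt⟩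
    exact ⟨C, hC, by rwa [← take_eq_take_min]⟩
  set t₀ := Nat.findGreatest Reach T.length
  have hB : B ∈ P ++ [B] := mem_append_right _ (mem_singleton_self B)
  obtain ⟨C₀, hC₀, hC₀t⟩ : Reach t₀ := by
    obtain ⟨t, ht⟩ := exists_le_setCost_take_inter hT hf (C := B)
      (by rw [Finset.inter_eq_right.2 (subset_blockUnion hB)])
    exact Nat.findGreatest_spec (min_le_right _ _) (hReach ⟨B, hB, ht⟩)
  have hdone : ∀ C ∈ P ++ [B], setCost c C ≤ setCost c ((T.take t₀).toFinset ∩ C) :=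
    fun C hC => (h.irreducible C hC).setCost_le_setCost_take_inter hr hT hf (subset_blockUnion hC)
      t₀ fun v hv => by
        have := Nat.le_findGreatest (min_le_right _ _) (hReach ⟨C, hC, hv⟩)
        rw [take_eq_take_min, take_eq_take_min (i := t₀)]
        congr 1
        omega
  have hret : setReturn r c C₀ ≤ setReturn r c B := by
    rcases mem_append.1 hC₀ with hC₀' | hC₀'
    · exact ((pairwise_append.1 h.increasing).2.2 C₀ hC₀' B (mem_singleton_self B)
        ).setReturn_le_of_nonneg (hnn C₀ hC₀)
    · rw [mem_singleton.1 hC₀']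
  have hexcess := sum_map_add_sub_le_sum_map hdone hC₀
  have hcost : ((P ++ [B]).map (setCost c)).sum = (P.map (setCost c)).sum + setCost c B := by simp
  unfold setReturn at hret
  calc (P.map (setCost c)).sum + setBudget r c B
      ≤ ((P ++ [B]).map fun C => setCost c ((T.take t₀).toFinset ∩ C)).sum := by
        linarith
    _ = setCost c (T.take t₀).toFinset := by
        rw [← setCost_inter_blockUnion h.disjoint,
          Finset.inter_eq_left.2 (isIdealIn_toFinset_take hT hf t₀).1]
    _ ≤ setBudget r c (blockUnion (P ++ [B])) := hTb ▸ setCost_toFinset_take_le_listBudget hT.1 t₀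

theorem IsIncreasingIrreducible.sum_add_setBudget_le (hr : IsPartialOrder ι r)
    {P Q : List (Finset ι)} {B : Finset ι} (h : IsIncreasingIrreducible r c (P ++ B :: Q)) :
    (P.map (setCost c)).sum + setBudget r c B ≤ setBudget r c (blockUnion (P ++ B :: Q)) := by
  induction hn : P.length + Q.length using Nat.strong_induction_on generalizing P Q with
  | _ n ih =>
  rcases P with _ | ⟨B₀, P⟩
  · simpa using h.setBudget_head_le hr
  rcases lt_or_ge (setCost c B₀) 0 with hneg | hnn
  · have hrest := ih _ (by simp [← hn]) (h.sublist (sublist_cons_self B₀ _)) rfl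
    have hdisj : Disjoint (blockUnion (P ++ B :: Q)) B₀ := disjoint_blockUnion_left.2
      fun C hC => ((pairwise_cons.1 h.disjoint).1 C hC).symm
    have := add_le_setBudget_union hr hdisj hrest fun J hJ =>
      (h.irreducible B₀ mem_cons_self).setCost_le_of_neg hr hneg hJ
    simp only [cons_append, blockUnion_cons, map_cons, sum_cons]
    rw [Finset.union_comm]
    linarith
  have hall : ∀ C ∈ (B₀ :: P) ++ B :: Q, 0 ≤ setCost c C := by
    intro C hC
    rcases mem_cons.1 hC with rfl | hC
    · exact hnn
    · exact ((pairwise_cons.1 h.increasing).1 C hC).setCost_nonneg_of_left hnn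
  rcases eq_nil_or_concat' Q with rfl | ⟨Q, Z, rfl⟩
  · exact h.sum_add_setBudget_le_of_nonneg hr hall
  have hsplit : (B₀ :: P) ++ B :: (Q ++ [Z]) = ((B₀ :: P) ++ B :: Q) ++ [Z] := by simp
  rw [hsplit] at h hall ⊢
  have hrest := ih _ (by simp [← hn]) (h.sublist (sublist_append_left _ _)) rfl
  have hdisj : Disjoint (blockUnion ((B₀ :: P) ++ B :: Q)) Z := disjoint_blockUnion_left.2
    fun C hC => (pairwise_append.1 h.disjoint).2.2 C hC Z (mem_singleton_self Z)
  have hZ : Z ∈ (B₀ :: P) ++ B :: Q ++ [Z] := mem_append_right _ (mem_singleton_self Z)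
  have := add_le_setBudget_union hr hdisj hrest fun J hJ =>
    (h.irreducible Z hZ J hJ).setCost_nonneg_of_left (hall Z hZ)
  simpa using this

/-! ### Budgets of block sequences -/

section SeqBudget

variable {α : Type*}

/-- The budget of a concatenation of schedules, the `x`-th of which costs `a x` and has budget
`b x` (see `listBudget_append`). -/
def seqBudget (a b : α → ℝ) : List α → ℝ
  | [] => 0
  | x :: L => max (b x) (a x + seqBudget a b L)

def seqReturn (a b : α → ℝ) (L : List α) : ℝ := (L.map a).sum - seqBudget a b L

variable {a b : α → ℝ}

lemma seqBudget_le : ∀ {L : List α} {B : ℝ}, 0 ≤ B → (∀ x ∈ L, a x ≤ b x) →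
    (∀ P x Q, L = P ++ x :: Q → (P.map a).sum + b x ≤ B) → seqBudget a b L ≤ B
  | [], _, hB, _, _ => hB
  | x :: L, B, hB, hab, h => by
    have hx : b x ≤ B := by simpa using h [] x L rfl
    have hL : seqBudget a b L ≤ B - a x := by
      refine seqBudget_le (by linarith [hab x mem_cons_self])
        (fun y hy => hab y (mem_cons_of_mem x hy)) fun P y Q hPQ => ?_
      have := h (x :: P) y Q (by rw [hPQ, cons_append])
      simp only [map_cons, sum_cons] at this
      linarith
    exact max_le hx (by linarith)

lemma seqBudget_concat {x : α} (h0 : 0 ≤ b x) (hx : a x ≤ b x) :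
    ∀ L : List α, seqBudget a b (L ++ [x]) = max (seqBudget a b L) ((L.map a).sum + b x)
  | [] => by simp [seqBudget, hx, h0]
  | y :: L => by
    simp only [cons_append, seqBudget, seqBudget_concat h0 hx L, map_cons, sum_cons,
      ← max_add_add_left, max_assoc, add_assoc]

lemma seqReturn_concat {x : α} (h0 : 0 ≤ b x) (hx : a x ≤ b x) (L : List α) :
    seqReturn a b (L ++ [x]) = min (seqReturn a b L + a x) (a x - b x) := by
  rw [seqReturn, seqBudget_concat h0 hx, map_append, sum_append, map_singleton, sum_singleton,
    ← min_sub_sub_left, seqReturn]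
  congr 1 <;> ring

lemma seqReturn_le_seqReturn_take {L : List α} (hneg : ∀ x ∈ L, a x < 0)
    (hb : ∀ x ∈ L, 0 ≤ b x ∧ a x ≤ b x) (l : ℕ) : seqReturn a b L ≤ seqReturn a b (L.take l) := by
  induction L using reverseRecOn generalizing l with
  | nil => simp
  | append_singleton L x ih =>
    have hx : x ∈ L ++ [x] := mem_append_right _ (mem_singleton_self x)
    by_cases hl : l ≤ L.length
    · rw [take_append_of_le_length hl, seqReturn_concat (hb x hx).1 (hb x hx).2]
      have := ih (fun y hy => hneg y (mem_append_left _ hy))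
        (fun y hy => hb y (mem_append_left _ hy)) l
      linarith [min_le_left (seqReturn a b L + a x) (a x - b x), hneg x hx]
    · rw [take_of_length_le (by simp; omega)]

theorem exists_seqReturn_take_le {a' b' : α → ℝ} (L : List α)
    (hb : ∀ x ∈ L, 0 ≤ b x ∧ a x ≤ b x) (hb' : ∀ x ∈ L, 0 ≤ b' x ∧ a' x ≤ b' x)
    (hret : ∀ x ∈ L, a x - b x ≤ a' x - b' x) (hcost : ∀ x ∈ L, a x < 0 → a x ≤ a' x)
    (hneg : ∀ x ∈ L, a' x < 0 → a x < 0) (hmono : L.Pairwise fun x y => a y < 0 → a x < 0) :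
    ∃ l ≤ L.length, seqReturn a b (L.take l) ≤ seqReturn a' b' L := by
  induction L using reverseRecOn with
  | nil => exact ⟨0, le_rfl, by simp [seqReturn, seqBudget]⟩
  | append_singleton L x ih =>
    have sub : ∀ y ∈ L, y ∈ L ++ [x] := fun y hy => mem_append_left _ hy
    have hx : x ∈ L ++ [x] := mem_append_right _ (mem_singleton_self x)
    obtain ⟨l, hl, hle⟩ := ih (fun y hy => hb y (sub y hy)) (fun y hy => hb' y (sub y hy))
      (fun y hy => hret y (sub y hy)) (fun y hy => hcost y (sub y hy))
      (fun y hy => hneg y (sub y hy)) (pairwise_append.1 hmono).1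
    have hfull := seqReturn_concat (hb x hx).1 (hb x hx).2 L
    rw [seqReturn_concat (hb' x hx).1 (hb' x hx).2]
    rcases lt_or_ge (a' x) 0 with hx' | hx'
    · -- then every block is negative, and the whole sequence does best
      have hax := hneg x hx hx'
      have hLneg : ∀ y ∈ L, a y < 0 :=
        fun y hy => (pairwise_append.1 hmono).2.2 y hy x (mem_singleton_self x) hax
      have := seqReturn_le_seqReturn_take hLneg (fun y hy => hb y (sub y hy)) l
      refine ⟨_, le_rfl, ?_⟩
      rw [take_length, hfull]
      exact min_le_min (by linarith [hcost x hx hax]) (hret x hx)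
    · have key : min (seqReturn a b (L.take l)) (seqReturn a b (L ++ [x])) ≤
          min (seqReturn a' b' L + a' x) (a' x - b' x) :=
        min_le_min (by linarith) (hfull ▸ (min_le_right _ _).trans (hret x hx))
      rcases le_total (seqReturn a b (L.take l)) (seqReturn a b (L ++ [x])) with h | h
      · refine ⟨l, by simp; omega, ?_⟩
        rw [take_append_of_le_length hl]
        exact min_eq_left h ▸ key
      · exact ⟨_, le_rfl, by rw [take_length]; exact min_eq_right h ▸ key⟩

end SeqBudget

lemma setBudget_inter_blockUnion_le (hr : IsPartialOrder ι r) {BS : List (Finset ι)}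
    (hd : BS.Pairwise _root_.Disjoint) (hfwd : BS.Pairwise fun A B => ∀ y ∈ A, ∀ x ∈ B, ¬ r x y)
    (I : Finset ι) :
    setBudget r c (I ∩ blockUnion BS) ≤
      seqBudget (fun C => setCost c (I ∩ C)) (fun C => setBudget r c (I ∩ C)) BS := by
  induction BS with
  | nil =>
    simpa [seqBudget, listBudget] using
      setBudget_le (r := r) (c := c) (X := ∅) (S := []) ⟨nodup_nil, by simp⟩ Pairwise.nil
  | cons C BS ih =>
    rw [pairwise_cons] at hd hfwd
    rw [blockUnion_cons, Finset.inter_union_distrib_left]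
    refine (setBudget_union_le hr ((disjoint_blockUnion_right.2 hd.1).mono
      Finset.inter_subset_right Finset.inter_subset_right) fun y hy x hx => ?_).trans ?_
    · obtain ⟨D, hD, hxD⟩ := mem_blockUnion.1 (Finset.mem_inter.1 hx).2
      exact hfwd.1 D hD y (Finset.mem_inter.1 hy).2 x hxD
    · simp only [seqBudget]
      exact max_le_max le_rfl (add_le_add le_rfl (ih hd.2 hfwd.2))

lemma IsIncreasingIrreducible.setReturn_blockUnion_le (hr : IsPartialOrder ι r)
    {BS : List (Finset ι)} (h : IsIncreasingIrreducible r c BS) :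
    setReturn r c (blockUnion BS) ≤ seqReturn (setCost c) (setBudget r c) BS := by
  have hb : seqBudget (setCost c) (setBudget r c) BS ≤ setBudget r c (blockUnion BS) :=
    seqBudget_le (setBudget_nonneg _) (fun C _ => setCost_le_setBudget hr C) fun P B Q hPQ => by
      subst hPQ
      exact h.sum_add_setBudget_le hr
  unfold setReturn seqReturn
  rw [setCost_blockUnion h.disjoint]
  linarith

theorem IsIncreasingIrreducible.exists_setReturn_blockUnion_take_le (hr : IsPartialOrder ι r)
    {BS : List (Finset ι)} (h : IsIncreasingIrreducible r c BS)
    (hfwd : BS.Pairwise fun A B => ∀ y ∈ A, ∀ x ∈ B, ¬ r x y) {I : Finset ι}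
    (hI : IsIdealIn r (blockUnion BS) I) :
    ∃ l ≤ BS.length, setReturn r c (blockUnion (BS.take l)) ≤ setReturn r c I := by
  have hIC : ∀ C ∈ BS, IsIdealIn r C (I ∩ C) :=
    fun C hC => hI.inter_of_subset (subset_blockUnion hC)
  obtain ⟨l, hl, hle⟩ := exists_seqReturn_take_le (a := setCost c) (b := setBudget r c)
    (a' := fun C => setCost c (I ∩ C)) (b' := fun C => setBudget r c (I ∩ C)) BS
    (fun C _ => ⟨setBudget_nonneg C, setCost_le_setBudget hr C⟩)
    (fun C _ => ⟨setBudget_nonneg _, setCost_le_setBudget hr _⟩)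
    (fun C hC => (h.irreducible C hC).setReturn_le hr (hIC C hC))
    (fun C hC hneg => (h.irreducible C hC).setCost_le_of_neg hr hneg (hIC C hC))
    (fun C hC hneg => (h.irreducible C hC _ (hIC C hC)).setCost_neg_of_right hneg)
    (h.increasing.imp fun hxy hy => hxy.setCost_neg_of_right hy)
  refine ⟨l, hl, ((h.sublist (take_sublist l BS)).setReturn_blockUnion_le hr).trans
    (hle.trans ?_)⟩
  have hb := setBudget_inter_blockUnion_le (c := c) hr h.disjoint hfwd I
  have hc := setCost_inter_blockUnion (c := c) h.disjoint I
  rw [Finset.inter_eq_left.2 hI.1] at hb hc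
  unfold seqReturn setReturn
  linarith

theorem prefix_min_return (r : ι → ι → Prop) (hr : IsPartialOrder ι r)
    (c : ι → ℝ) (N : Finset ι) (SS : List (List ι))
    (h : IncIrrStructure r c N SS) :
    ∃ l ≤ SS.length,
      IsIdealIn r N ((SS.take l).flatten.toFinset) ∧
      ∀ I, IsIdealIn r N I →
        setReturn r c ((SS.take l).flatten.toFinset) ≤ setReturn r c I := by
  obtain ⟨hN, hresp, hblocks, hincr⟩ := h
  have hfeas := (respectsOrder_iff_pairwise hN.1).1 hresp
  have hBS : IsIncreasingIrreducible r c (SS.map toFinset) :=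
    ⟨forall_mem_map.2 fun S hS => (hblocks S hS).1.2, pairwise_map.2 (pairwise_iff_get.2 hincr),
      pairwise_map.2 ((nodup_flatten.1 hN.1).2.imp disjoint_toFinset_iff_disjoint.2)⟩
  have hfwd : (SS.map toFinset).Pairwise fun A B => ∀ y ∈ A, ∀ x ∈ B, ¬ r x y :=
    pairwise_map.2 ((pairwise_flatten.1 hfeas).2.imp fun h y hy x hx =>
      h y (mem_toFinset.1 hy) x (mem_toFinset.1 hx))
  have hprefix (l : ℕ) : (SS.take l).flatten.toFinset = blockUnion ((SS.map toFinset).take l) := by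
    rw [← map_take, blockUnion_map_toFinset]
  have hideal (l : ℕ) : IsIdealIn r N (SS.take l).flatten.toFinset := by
    have hpre : (SS.take l).flatten <+: SS.flatten :=
      ⟨(SS.drop l).flatten, by rw [← flatten_append, take_append_drop]⟩
    rw [prefix_iff_eq_take.1 hpre]
    exact isIdealIn_toFinset_take hN hfeas _
  obtain ⟨l, hl, hmin⟩ := Finset.exists_min_image (Finset.range (SS.length + 1))
    (fun l => setReturn r c (SS.take l).flatten.toFinset) ⟨0, by simp⟩
  refine ⟨l, Nat.lt_succ_iff.1 (Finset.mem_range.1 hl), hideal l, fun I hI => ?_⟩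
  rw [← hN.toFinset_eq, ← blockUnion_map_toFinset] at hI
  obtain ⟨l', hl', hle⟩ := hBS.exists_setReturn_blockUnion_take_le hr hfwd hI
  rw [← hprefix] at hle
  exact (hmin l' (Finset.mem_range.2 (by simpa using Nat.lt_succ_of_le hl'))).trans hle
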